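/- For n ≥ 3, let P_n be the double directed cycle on vertex set Z_n with edges e_i from i to i+1 and e_i' from i+1 to i for all i ∈ Z_n (indices mod n). Then the facets of the pure (n−2)-skeleton of Dlf(P_n) are precisely the sets {e_i, e_{i+1}, …, e_{i−2}} and {e_i', e_{i+1}', …, e_{i−2}'} for i ∈ Z_n, this pure skeleton is disconnected, and hence Dlf(P_n) is not sequentially Cohen-Macaulay and not shellable. -/

import Mathlib

namespace ArXiv

/-! ## Multidigraphs and their directed-forest complexes.
A multidigraph on vertex type `V` with edge type `E` is given by source and
target maps `s t : E → V`. -/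

/-- `σ` induces a directed cycle (of some length `n ≥ 1`) in the multidigraph `(s, t)`:
its edges can be arranged cyclically, with pairwise distinct sources, the target of each
edge being the source of the next one. -/
def IsDirCycle {V E : Type} (s t : E → V) (n : ℕ) (σ : Finset E) : Prop :=
  0 < n ∧ ∃ g : ZMod n → E, Function.Injective g ∧
    (∀ e, e ∈ σ ↔ ∃ i, g i = e) ∧
    Function.Injective (fun i => s (g i)) ∧
    (∀ i, t (g i) = s (g (i + 1)))

/-- No subset of `σ` induces a directed cycle. -/
def NoDirCycleIn {V E : Type} (s t : E → V) (σ : Finset E) : Prop :=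
  ∀ (n : ℕ) (τ : Finset E), τ ⊆ σ → ¬ IsDirCycle s t n τ

/-- `σ` induces a vertex-disjoint union of directed paths: all sources are distinct,
all targets are distinct, and there is no directed cycle inside `σ`. -/
def IsLinearForest {V E : Type} (s t : E → V) (σ : Finset E) : Prop :=
  (∀ e ∈ σ, ∀ f ∈ σ, e ≠ f → s e ≠ s f) ∧
  (∀ e ∈ σ, ∀ f ∈ σ, e ≠ f → t e ≠ t f) ∧
  NoDirCycleIn s t σ

/-- `σ` induces a directed forest: no two distinct edges share a target and there is
no directed cycle inside `σ`. -/
def IsDirForest {V E : Type} (s t : E → V) (σ : Finset E) : Prop :=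
  (∀ e ∈ σ, ∀ f ∈ σ, e ≠ f → t e ≠ t f) ∧
  NoDirCycleIn s t σ

/-- The directed linear forest complex `Dlf(D)`, as its set of faces. -/
def Dlf {V E : Type} (s t : E → V) : Set (Finset E) := {σ | IsLinearForest s t σ}

/-- The directed tree complex `DT(D)`, as its set of faces. -/
def DT {V E : Type} (s t : E → V) : Set (Finset E) := {σ | IsDirForest s t σ}

/-- The edges `e` and `f` have the same unordered pair of endpoints. -/
def SameEnds {V E : Type} (s t : E → V) (e f : E) : Prop :=
  (s e = s f ∧ t e = t f) ∨ (s e = t f ∧ t e = s f)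

/-- Adjacency in the linear-forest conflict graph `G^lf_D`. -/
def LFAdj {V E : Type} (s t : E → V) (e f : E) : Prop :=
  e ≠ f ∧ (s e = s f ∨ t e = t f ∨ SameEnds s t e f)

/-- Adjacency in the tree conflict graph `G^t_D`. -/
def TAdj {V E : Type} (s t : E → V) (e f : E) : Prop :=
  e ≠ f ∧ (t e = t f ∨ SameEnds s t e f)

/-- `σ` is an independent set for the adjacency relation `A`. -/
def IndepIn {E : Type} (A : E → E → Prop) (σ : Finset E) : Prop :=
  ∀ e ∈ σ, ∀ f ∈ σ, ¬ A e f

/-- `D` has no directed cycle of length at least 3 (directed 2-cycles are allowed). -/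
def TwoAcyclic {V E : Type} (s t : E → V) : Prop :=
  ∀ (n : ℕ) (σ : Finset E), 3 ≤ n → ¬ IsDirCycle s t n σ

/-- `D` has no directed cycles at all. -/
def Acyclic {V E : Type} (s t : E → V) : Prop :=
  ∀ (n : ℕ) (σ : Finset E), ¬ IsDirCycle s t n σ

/-- Adjacency in the underlying (simple, undirected) graph of `D`. -/
def UAdj {V E : Type} (s t : E → V) (u v : V) : Prop :=
  u ≠ v ∧ ∃ e, (s e = u ∧ t e = v) ∨ (s e = v ∧ t e = u)

/-- The underlying graph of `D` is a forest: it contains no cycle of length `≥ 3`. -/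
def UnderlyingForest {V E : Type} (s t : E → V) : Prop :=
  ¬ ∃ m : ℕ, 3 ≤ m ∧ ∃ h : ZMod m → V, Function.Injective h ∧
    ∀ i, UAdj s t (h i) (h (i + 1))

/-- An alternating closed trail: a cyclic sequence of distinct edges in which any two
cyclically consecutive edges share a source or share a target. -/
def HasAltClosedTrail {V E : Type} (s t : E → V) : Prop :=
  ∃ k : ℕ, 2 ≤ k ∧ ∃ g : ZMod k → E, Function.Injective g ∧
    ∀ i, s (g i) = s (g (i + 1)) ∨ t (g i) = t (g (i + 1))

/-- `D` has no induced subgraph isomorphic to `L₂`, the double directed string on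
three vertices. -/
def IsL2Free {V E : Type} (s t : E → V) : Prop :=
  ¬ ∃ a b c : V, a ≠ b ∧ b ≠ c ∧ a ≠ c ∧
    ∃ e1 e2 e3 e4 : E,
      e1 ≠ e2 ∧ e1 ≠ e3 ∧ e1 ≠ e4 ∧ e2 ≠ e3 ∧ e2 ≠ e4 ∧ e3 ≠ e4 ∧
      s e1 = a ∧ t e1 = b ∧ s e2 = b ∧ t e2 = a ∧
      s e3 = b ∧ t e3 = c ∧ s e4 = c ∧ t e4 = b ∧
      ∀ f : E, s f ∈ ({a, b, c} : Set V) → t f ∈ ({a, b, c} : Set V) →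
        f ∈ ({e1, e2, e3, e4} : Set E)

/-- The relation `A` (a graph on `β`) has an induced cycle of length at least 4. -/
def HasInducedCycleGE4 {β : Type} (A : β → β → Prop) : Prop :=
  ∃ n : ℕ, 4 ≤ n ∧ ∃ g : ZMod n → β, Function.Injective g ∧
    ∀ i j : ZMod n, i ≠ j → (A (g i) (g j) ↔ j = i + 1 ∨ i = j + 1)

/-! ## Simplicial complexes (as sets of faces). -/

/-- `σ` is a facet (inclusion-maximal face) of `Δ`. -/
def IsFacetOf {α : Type} (Δ : Set (Finset α)) (σ : Finset α) : Prop :=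
  σ ∈ Δ ∧ ∀ τ ∈ Δ, σ ⊆ τ → σ = τ

/-- Deletion of the vertex `v` in `Δ`. -/
def delC {α : Type} (Δ : Set (Finset α)) (v : α) : Set (Finset α) :=
  {τ ∈ Δ | v ∉ τ}

/-- Link of the vertex `v` in `Δ`. -/
def linkC {α : Type} [DecidableEq α] (Δ : Set (Finset α)) (v : α) : Set (Finset α) :=
  {τ | τ ∈ Δ ∧ v ∉ τ ∧ insert v τ ∈ Δ}

/-- `v` is a shedding vertex: every facet of the deletion is a facet of `Δ`. -/
def SheddingVertex {α : Type} (Δ : Set (Finset α)) (v : α) : Prop :=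
  ∀ σ, IsFacetOf (delC Δ v) σ → IsFacetOf Δ σ

/-- Vertex decomposability. -/
inductive VertexDecomposable {α : Type} [DecidableEq α] : Set (Finset α) → Prop
  | void : VertexDecomposable (∅ : Set (Finset α))
  | simplex (σ : Finset α) : VertexDecomposable {τ | τ ⊆ σ}
  | shed (Δ : Set (Finset α)) (v : α) :
      VertexDecomposable (linkC Δ v) → VertexDecomposable (delC Δ v) →
      SheddingVertex Δ v → VertexDecomposable Δ

/-- Shellability (in the non-pure sense of Björner–Wachs). -/
def Shellable {α : Type} (Δ : Set (Finset α)) : Prop :=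
  ∃ (m : ℕ) (F : Fin m → Finset α), Function.Injective F ∧
    (∀ σ, IsFacetOf Δ σ ↔ ∃ i, F i = σ) ∧
    ∀ i : Fin m, 0 < (i : ℕ) → ∀ τ : Finset α, τ ⊆ F i → (∃ j, j < i ∧ τ ⊆ F j) →
      ∃ ρ : Finset α, ρ ⊆ F i ∧ (∃ j, j < i ∧ ρ ⊆ F j) ∧
        ρ.card + 1 = (F i).card ∧ τ ⊆ ρ

/-- The pure `d`-skeleton of `Δ`: the subcomplex generated by the `d`-dimensional faces. -/
def pureSkel {α : Type} (Δ : Set (Finset α)) (d : ℕ) : Set (Finset α) :=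
  {τ | ∃ σ ∈ Δ, σ.card = d + 1 ∧ τ ⊆ σ}

/-- Link of a face `σ` in `Δ`. -/
def linkFaceC {α : Type} [DecidableEq α] (Δ : Set (Finset α)) (σ : Finset α) :
    Set (Finset α) :=
  {τ | τ ∩ σ = ∅ ∧ τ ∪ σ ∈ Δ}

/-- Connectivity of a simplicial complex: any two vertices are joined by an edge path. -/
def ComplexConnected {α : Type} [DecidableEq α] (Δ : Set (Finset α)) : Prop :=
  ∀ u v : α, ({u} : Finset α) ∈ Δ → ({v} : Finset α) ∈ Δ →
    Relation.ReflTransGen (fun a b => ({a, b} : Finset α) ∈ Δ) u v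

/-! ## Simplicial homology via ordered chains, and (sequential) Cohen–Macaulayness. -/

/-- A chain (a function on ordered tuples) is supported on faces of `Δ`. -/
def validChain {α K : Type} [DecidableEq α] [Field K] {k : ℕ}
    (Δ : Set (Finset α)) (c : (Fin k → α) → K) : Prop :=
  ∀ g, c g ≠ 0 → (Finset.univ.image g) ∈ Δ

/-- The simplicial boundary operator on ordered chains. -/
def bdry {α K : Type} [Fintype α] [Field K] {k : ℕ}
    (c : (Fin (k + 2) → α) → K) : (Fin (k + 1) → α) → K :=
  fun g => ∑ j : Fin (k + 2), (-1 : K) ^ (j : ℕ) * ∑ v : α, c (Fin.insertNth j v g)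

/-- Vanishing of the `i`-th reduced simplicial homology of `Δ` with coefficients in `K`
(computed with ordered chains; degree `0` uses the augmentation). -/
def RHomZero (α K : Type) [Fintype α] [DecidableEq α] [Field K]
    (Δ : Set (Finset α)) : ℕ → Prop
  | 0 => ∀ c : (Fin 1 → α) → K, validChain Δ c → (∑ g : Fin 1 → α, c g) = 0 →
      ∃ b : (Fin 2 → α) → K, validChain Δ b ∧ bdry b = c
  | (i + 1) => ∀ c : (Fin (i + 2) → α) → K, validChain Δ c → bdry c = 0 →
      ∃ b : (Fin (i + 3) → α) → K, validChain Δ b ∧ bdry b = c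

/-- `Δ` is Cohen–Macaulay over `K`: for every face `σ`, the reduced homology of its
link vanishes in all degrees strictly below the dimension of the link. -/
def IsCM (α K : Type) [Fintype α] [DecidableEq α] [Field K]
    (Δ : Set (Finset α)) : Prop :=
  ∀ σ ∈ Δ, ∀ i : ℕ, (∃ τ ∈ linkFaceC Δ σ, i + 2 ≤ τ.card) →
    RHomZero α K (linkFaceC Δ σ) i

/-- `Δ` is sequentially Cohen–Macaulay over `K`: every pure skeleton is Cohen–Macaulay. -/
def IsSCM (α K : Type) [Fintype α] [DecidableEq α] [Field K]
    (Δ : Set (Finset α)) : Prop :=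
  ∀ d : ℕ, IsCM α K (pureSkel Δ d)

/-! ## The double directed string `Lₙ` and the double directed cycle `Pₙ`. -/

/-- Source map of `Lₙ`: `inl i` is the edge `i → i+1`, `inr i` the edge `i+1 → i`. -/
def sL (n : ℕ) : Fin n ⊕ Fin n → Fin (n + 1) := Sum.elim Fin.castSucc Fin.succ

/-- Target map of `Lₙ`. -/
def tL (n : ℕ) : Fin n ⊕ Fin n → Fin (n + 1) := Sum.elim Fin.succ Fin.castSucc

/-- Source map of `Pₙ`: `inl i` is the edge `eᵢ : i → i+1`, `inr i` is `eᵢ' : i+1 → i`. -/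
def sP (n : ℕ) : ZMod n ⊕ ZMod n → ZMod n := Sum.elim id (fun i => i + 1)

/-- Target map of `Pₙ`. -/
def tP (n : ℕ) : ZMod n ⊕ ZMod n → ZMod n := Sum.elim (fun i => i + 1) id

/-!
If a forward edge `eₐ` and a backward edge `e'_b` of `Pₙ` lie in a common linear forest, then
`b ∉ {a - 1, a, a + 1}`: otherwise they form a directed 2-cycle or share a source or a target.
Walking around `ℤ/n`, the forward indices and the backward indices of such a mixed face each have
a successor that lies in neither set, so at least two indices are unused and the face has at most
`n - 2` edges. Since the forward edges form a directed `n`-cycle, a face with `n - 1` edges is all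
forward edges but one, or all backward edges but one.

So in the pure `(n - 2)`-skeleton no forward edge is joined to a backward edge and the skeleton
is disconnected; a Cohen–Macaulay complex of dimension at least one has vanishing reduced `H₀`,
hence is connected. For shellability, a facet meeting `{e_j : j ≠ i}` in a ridge contains `n - 2`
forward edges, so it has no backward edge and is again a forward path; in a shelling every facet
is linked by such ridges to an earlier one, so the first facet would be a forward and a backward
path at the same time.
-/

open Finset

section SimplicialComplex

variable {α : Type}

theorem isFacetOf_pureSkel_iff {Δ : Set (Finset α)} {d : ℕ} {σ : Finset α} :
    IsFacetOf (pureSkel Δ d) σ ↔ σ ∈ Δ ∧ σ.card = d + 1 := by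
  constructor
  · rintro ⟨⟨ρ, hρ, hρcard, hσρ⟩, hmax⟩
    obtain rfl := hmax ρ ⟨ρ, hρ, hρcard, subset_rfl⟩ hσρ
    exact ⟨hρ, hρcard⟩
  · rintro ⟨hσ, hcard⟩
    refine ⟨⟨σ, hσ, hcard, subset_rfl⟩, fun τ ⟨ρ, _, hρcard, hτρ⟩ hστ => ?_⟩
    exact eq_of_subset_of_card_le hστ (by grw [card_le_card hτρ]; omega)

theorem linkFaceC_empty [DecidableEq α] (Δ : Set (Finset α)) : linkFaceC Δ ∅ = Δ := by
  ext τ; simp [linkFaceC]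

theorem sum_fin_one {M : Type} [AddCommMonoid M] [Fintype α] (f : α → M) :
    ∑ g : Fin 1 → α, f (g 0) = ∑ x, f x :=
  Fintype.sum_equiv (Equiv.funUnique (Fin 1) α) _ _ fun _ => rfl

theorem sum_mul_insertNth {K : Type} [Field K] [Fintype α] (φ : α → K) (b : (Fin 2 → α) → K)
    (p : Fin 2) :
    ∑ g : Fin 1 → α, ∑ w : α, φ (g 0) * b (Fin.insertNth p w g) =
      ∑ h : Fin 2 → α, φ (h (p.succAbove 0)) * b h := by
  rw [← Fintype.sum_prod_type']
  exact Fintype.sum_equiv ((Equiv.prodComm _ _).trans (Fin.insertNthEquiv (fun _ => α) p)) _ _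
    fun x => by simp [Fin.insertNthEquiv]

theorem sum_mul_bdry {K : Type} [Field K] [Fintype α] (φ : α → K) (b : (Fin 2 → α) → K) :
    ∑ g : Fin 1 → α, φ (g 0) * bdry b g = ∑ h : Fin 2 → α, (φ (h 1) - φ (h 0)) * b h := by
  have hg (g : Fin 1 → α) : φ (g 0) * bdry b g =
      ∑ w, φ (g 0) * b (Fin.insertNth 0 w g) - ∑ w, φ (g 0) * b (Fin.insertNth 1 w g) := by
    simp [bdry, Fin.sum_univ_two, mul_sum, sub_eq_add_neg, mul_add]
  simp_rw [hg, sum_sub_distrib, sum_mul_insertNth, sub_mul, sum_sub_distrib]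
  simp

theorem complexConnected_of_rHomZero_zero [Fintype α] [DecidableEq α] {K : Type} [Field K]
    {Δ : Set (Finset α)} (h : RHomZero α K Δ 0) : ComplexConnected Δ := by
  classical
  intro u v hu hv
  by_contra huv
  let δ : α → K := fun x => (if x = u then 1 else 0) - (if x = v then 1 else 0)
  have hδ : validChain Δ fun g : Fin 1 → α => δ (g 0) := by
    intro g hg
    have hg' : univ.image g = {g 0} := by ext x; simp
    have : g 0 = u ∨ g 0 = v := by by_contra!; simp_all [δ]
    rcases this with h | h <;> rwa [hg', h]
  obtain ⟨b, hb, hbδ⟩ := h _ hδ (by rw [sum_fin_one δ]; simp [δ, sum_sub_distrib])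
  -- pairing with the indicator `φ` of the component of `u` kills boundaries, since `φ` is
  -- constant along edges, but gives `1` on the `0`-cycle `[u] - [v]`
  let r : α → α → Prop := fun a b => ({a, b} : Finset α) ∈ Δ
  let φ : α → K := fun x => if Relation.ReflTransGen r u x then 1 else 0
  have hφ (e : Fin 2 → α) (he : b e ≠ 0) : φ (e 1) = φ (e 0) := by
    have hface : r (e 0) (e 1) := by
      convert hb e he using 1
      ext x; simp [Fin.exists_fin_two, eq_comm]
    have hiff : Relation.ReflTransGen r u (e 1) ↔ Relation.ReflTransGen r u (e 0) :=
      ⟨fun h => h.tail (by simpa only [r, pair_comm] using hface), fun h => h.tail hface⟩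
    simp only [φ, hiff]
  have h0 : ∑ g : Fin 1 → α, φ (g 0) * bdry b g = 0 := by
    rw [sum_mul_bdry]
    refine sum_eq_zero fun e _ => ?_
    by_cases he : b e = 0
    · rw [he, mul_zero]
    · rw [hφ e he, sub_self, zero_mul]
  have h1 : ∑ g : Fin 1 → α, φ (g 0) * bdry b g = 1 := by
    simp only [hbδ]
    rw [sum_fin_one fun x => φ x * δ x]
    simp [δ, φ, r, mul_sub, sum_sub_distrib, huv, Relation.ReflTransGen.refl]
  exact zero_ne_one (h0.symm.trans h1)

theorem IsCM.complexConnected [Fintype α] [DecidableEq α] {K : Type} [Field K]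
    {Δ : Set (Finset α)} (h : IsCM α K Δ) (h0 : ∅ ∈ Δ) {τ : Finset α} (hτ : τ ∈ Δ)
    (hcard : 2 ≤ τ.card) : ComplexConnected Δ := by
  have := h ∅ h0 0 ⟨τ, by rwa [linkFaceC_empty], hcard⟩
  rw [linkFaceC_empty] at this
  exact complexConnected_of_rHomZero_zero this

def RidgeClosed (Δ : Set (Finset α)) (P : Finset α → Prop) : Prop :=
  ∀ ⦃σ τ ρ : Finset α⦄, IsFacetOf Δ σ → IsFacetOf Δ τ → P σ → ρ ⊆ σ → ρ ⊆ τ →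
    ρ.card + 1 = σ.card → P τ

theorem not_shellable_of_ridgeClosed {Δ : Set (Finset α)} {P Q : Finset α → Prop}
    (hP : RidgeClosed Δ P) (hQ : RidgeClosed Δ Q)
    (hPQ : ∀ σ, IsFacetOf Δ σ → P σ → Q σ → False)
    {σ τ : Finset α} (hσ : IsFacetOf Δ σ) (hPσ : P σ) (hτ : IsFacetOf Δ τ) (hQτ : Q τ) :
    ¬ Shellable Δ := by
  rintro ⟨m, F, -, hF, hshell⟩
  have hfacet (i : Fin m) : IsFacetOf Δ (F i) := (hF _).2 ⟨i, rfl⟩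
  obtain ⟨i, rfl⟩ := (hF σ).1 hσ
  have hm : 0 < m := i.pos
  -- the shelling condition for the empty face gives each later facet a ridge shared with an
  -- earlier one, so the first facet inherits every ridge-closed property of any facet
  have first {R : Finset α → Prop} (hR : RidgeClosed Δ R) (i : Fin m) (hi : R (F i)) :
      R (F ⟨0, hm⟩) := by
    induction i using WellFoundedLT.induction with
    | _ i ih =>
      rcases Nat.eq_zero_or_pos i with h | h
      · rwa [show i = ⟨0, hm⟩ from Fin.ext h] at hi
      · obtain ⟨ρ, hρi, ⟨j, hji, hρj⟩, hcard, -⟩ :=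
          hshell i h ∅ (empty_subset _) ⟨⟨0, hm⟩, Fin.mk_lt_of_lt_val h, empty_subset _⟩
        exact ih j hji (hR (hfacet i) (hfacet j) hi hρi hρj hcard)
  obtain ⟨k, rfl⟩ := (hF τ).1 hτ
  exact hPQ _ (hfacet _) (first hP i hPσ) (first hQ k hQτ)

end SimplicialComplex

section Cyclic

variable {n : ℕ} [NeZero n]

theorem eq_univ_of_forall_add_mem {S : Finset (ZMod n)} {c : ZMod n} (hc : IsUnit c)
    (hS : S.Nonempty) (h : ∀ x ∈ S, x + c ∈ S) : S = univ := by
  obtain ⟨x₀, hx₀⟩ := hS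
  have hk (k : ℕ) : x₀ + k * c ∈ S := by
    induction k with
    | zero => simpa
    | succ k ih => simpa [add_mul, ← add_assoc] using h _ ih
  refine eq_univ_of_forall fun y => ?_
  simpa [mul_assoc] using hk ((y - x₀) * ↑hc.unit⁻¹).val

theorem exists_mem_add_one_notMem {S : Finset (ZMod n)} (hS : S.Nonempty) (hS' : S ≠ univ) :
    ∃ x ∈ S, x + 1 ∉ S := by
  by_contra! h
  exact hS' (eq_univ_of_forall_add_mem isUnit_one hS h)

theorem card_add_card_add_two_le {A B : Finset (ZMod n)} (hA : A.Nonempty) (hB : B.Nonempty)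
    (hAB : ∀ a ∈ A, ∀ b ∈ B, a ≠ b ∧ a + 1 ≠ b ∧ b + 1 ≠ a) : A.card + B.card + 2 ≤ n := by
  have hdisj : Disjoint A B := disjoint_left.2 fun a ha hb => (hAB a ha a hb).1 rfl
  obtain ⟨a, ha, ha'⟩ := exists_mem_add_one_notMem hA fun h => by
    obtain ⟨b, hb⟩ := hB; exact disjoint_left.1 hdisj (h ▸ mem_univ b) hb
  obtain ⟨b, hb, hb'⟩ := exists_mem_add_one_notMem hB fun h => by
    obtain ⟨a, ha⟩ := hA; exact disjoint_left.1 hdisj ha (h ▸ mem_univ a)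
  have hsub : ({a + 1, b + 1} : Finset (ZMod n)) ⊆ (A ∪ B)ᶜ := by
    simp only [insert_subset_iff, singleton_subset_iff, mem_compl, mem_union, not_or]
    exact ⟨⟨ha', fun h => (hAB a ha _ h).2.1 rfl⟩, fun h => (hAB _ h b hb).2.2 rfl, hb'⟩
  have hne : a + 1 ≠ b + 1 := fun h => (hAB a ha b hb).1 (add_right_cancel h)
  have hle := card_le_card hsub
  rw [card_pair hne, card_compl, ZMod.card, card_union_of_disjoint hdisj] at hle
  have hle' := card_le_univ (A ∪ B)
  rw [card_union_of_disjoint hdisj, ZMod.card] at hle'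
  omega

end Cyclic

section Multidigraph

variable {V E : Type} {s t : E → V} {m : ℕ} {τ : Finset E}

theorem IsDirCycle.nonempty (h : IsDirCycle s t m τ) : τ.Nonempty := by
  obtain ⟨-, g, -, hg, -⟩ := h
  exact ⟨g 0, (hg _).2 ⟨0, rfl⟩⟩

theorem IsDirCycle.exists_source_eq_target (h : IsDirCycle s t m τ) {e : E} (he : e ∈ τ) :
    ∃ f ∈ τ, s f = t e := by
  obtain ⟨-, g, -, hg, -, hnext⟩ := h
  obtain ⟨i, rfl⟩ := (hg e).1 he
  exact ⟨g (i + 1), (hg _).2 ⟨_, rfl⟩, (hnext i).symm⟩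

theorem isDirCycle_pair [DecidableEq E] {e f : E} (hef : e ≠ f) (hs : s e ≠ s f)
    (he : t e = s f) (hf : t f = s e) : IsDirCycle s t 2 {e, f} := by
  refine ⟨two_pos, ![e, f], ?_, fun x => ?_, ?_, ?_⟩
  · intro i j; fin_cases i <;> fin_cases j <;> first | (intro _; rfl) | simp [hef, hef.symm]
  · simp only [mem_insert, mem_singleton]
    constructor
    · rintro (rfl | rfl)
      exacts [⟨0, rfl⟩, ⟨1, rfl⟩]
    · rintro ⟨i, rfl⟩
      fin_cases i
      exacts [.inl rfl, .inr rfl]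
  · intro i j; fin_cases i <;> fin_cases j <;> first | (intro _; rfl) | simp [hs, hs.symm]
  · intro i; fin_cases i
    · exact he
    · exact hf

end Multidigraph

section DoubleCycle

open Sum

variable {n : ℕ}

@[simp] theorem sP_inl (a : ZMod n) : sP n (inl a) = a := rfl
@[simp] theorem sP_inr (a : ZMod n) : sP n (inr a) = a + 1 := rfl
@[simp] theorem tP_inl (a : ZMod n) : tP n (inl a) = a + 1 := rfl
@[simp] theorem tP_inr (a : ZMod n) : tP n (inr a) = a := rfl

theorem isDirCycle_inl_inr [Fact (1 < n)] (a : ZMod n) :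
    IsDirCycle (sP n) (tP n) 2 {inl a, inr a} :=
  isDirCycle_pair inl_ne_inr (by simp) (by simp) (by simp)

theorem ne_and_add_one_ne_of_inl_mem_of_inr_mem [Fact (1 < n)] {σ : Finset (ZMod n ⊕ ZMod n)}
    (hσ : σ ∈ Dlf (sP n) (tP n)) {a b : ZMod n} (ha : inl a ∈ σ) (hb : inr b ∈ σ) :
    a ≠ b ∧ a + 1 ≠ b ∧ b + 1 ≠ a := by
  obtain ⟨hs, ht, hcyc⟩ := hσ
  refine ⟨?_, fun h => ht _ ha _ hb inl_ne_inr (by simpa),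
    fun h => hs _ ha _ hb inl_ne_inr (by simpa using h.symm)⟩
  rintro rfl
  exact hcyc 2 _ (insert_subset ha (singleton_subset_iff.2 hb)) (isDirCycle_inl_inr a)

variable [NeZero n]

-- `{eᵢ, eᵢ₊₁, …, eᵢ₋₂}` is `forwardPath n (i - 1)`, the Hamiltonian path `i → i + 1 → ⋯ → i - 1`
def forwardPath (n : ℕ) [NeZero n] (j : ZMod n) : Finset (ZMod n ⊕ ZMod n) :=
  (univ.image inl).erase (inl j)

def backwardPath (n : ℕ) [NeZero n] (j : ZMod n) : Finset (ZMod n ⊕ ZMod n) :=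
  (univ.image inr).erase (inr j)

@[simp] theorem inl_mem_forwardPath {a j : ZMod n} : inl a ∈ forwardPath n j ↔ a ≠ j := by
  simp [forwardPath]

@[simp] theorem inr_notMem_forwardPath {b j : ZMod n} : inr b ∉ forwardPath n j := by
  simp [forwardPath]

@[simp] theorem inr_mem_backwardPath {b j : ZMod n} : inr b ∈ backwardPath n j ↔ b ≠ j := by
  simp [backwardPath]

@[simp] theorem inl_notMem_backwardPath {a j : ZMod n} : inl a ∉ backwardPath n j := by
  simp [backwardPath]

theorem card_forwardPath (j : ZMod n) : (forwardPath n j).card = n - 1 := by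
  rw [forwardPath, card_erase_of_mem (by simp), card_image_of_injective _ inl_injective,
    card_univ, ZMod.card]

theorem card_backwardPath (j : ZMod n) : (backwardPath n j).card = n - 1 := by
  rw [backwardPath, card_erase_of_mem (by simp), card_image_of_injective _ inr_injective,
    card_univ, ZMod.card]

theorem isDirCycle_image_inl : IsDirCycle (sP n) (tP n) n (univ.image inl) :=
  ⟨Nat.pos_of_neZero n, inl, inl_injective, by simp, fun _ _ h => h, fun _ => rfl⟩

theorem isDirCycle_image_inr : IsDirCycle (sP n) (tP n) n (univ.image inr) := by
  refine ⟨Nat.pos_of_neZero n, fun i => inr (-i), fun i j h => by simpa using h, ?_,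
    fun i j h => by simpa using h, fun i => by simp⟩
  intro e
  cases e with
  | inl a => simp
  | inr b => simpa using ⟨-b, neg_neg b⟩

theorem forall_inl_mem_of_isDirCycle {m : ℕ} {τ : Finset (ZMod n ⊕ ZMod n)}
    (hτ : IsDirCycle (sP n) (tP n) m τ) (hτR : τ.toRight = ∅) (a : ZMod n) : inl a ∈ τ := by
  have hinl {e} (he : e ∈ τ) : ∃ a, e = inl a := by
    cases e with
    | inl a => exact ⟨a, rfl⟩
    | inr b => simpa [hτR] using mem_toRight.2 he
  -- the edge after `eᵢ` in the cycle can only be `eᵢ₊₁`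
  suffices τ.toLeft = univ from mem_toLeft.1 (this ▸ mem_univ a)
  refine eq_univ_of_forall_add_mem isUnit_one ?_ fun b hb => ?_
  · obtain ⟨e, he⟩ := hτ.nonempty
    obtain ⟨a, rfl⟩ := hinl he
    exact ⟨a, mem_toLeft.2 he⟩
  · obtain ⟨f, hf, hsf⟩ := hτ.exists_source_eq_target (mem_toLeft.1 hb)
    obtain ⟨c, rfl⟩ := hinl hf
    simp only [sP_inl, tP_inl] at hsf
    exact mem_toLeft.2 (hsf ▸ hf)

theorem forall_inr_mem_of_isDirCycle {m : ℕ} {τ : Finset (ZMod n ⊕ ZMod n)}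
    (hτ : IsDirCycle (sP n) (tP n) m τ) (hτL : τ.toLeft = ∅) (b : ZMod n) : inr b ∈ τ := by
  have hinr {e} (he : e ∈ τ) : ∃ b, e = inr b := by
    cases e with
    | inl a => simpa [hτL] using mem_toLeft.2 he
    | inr b => exact ⟨b, rfl⟩
  suffices τ.toRight = univ from mem_toRight.1 (this ▸ mem_univ b)
  refine eq_univ_of_forall_add_mem isUnit_one.neg ?_ fun b hb => ?_
  · obtain ⟨e, he⟩ := hτ.nonempty
    obtain ⟨b, rfl⟩ := hinr he
    exact ⟨b, mem_toRight.2 he⟩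
  · obtain ⟨f, hf, hsf⟩ := hτ.exists_source_eq_target (mem_toRight.1 hb)
    obtain ⟨c, rfl⟩ := hinr hf
    simp only [sP_inr, tP_inr] at hsf
    rw [← hsf, add_neg_cancel_right]
    exact mem_toRight.2 hf

theorem exists_inl_notMem {σ : Finset (ZMod n ⊕ ZMod n)} (hσ : σ ∈ Dlf (sP n) (tP n)) :
    ∃ j, inl j ∉ σ := by
  by_contra! h
  exact hσ.2.2 n _ (fun e he => by obtain ⟨a, -, rfl⟩ := mem_image.1 he; exact h a)
    isDirCycle_image_inl

theorem exists_inr_notMem {σ : Finset (ZMod n ⊕ ZMod n)} (hσ : σ ∈ Dlf (sP n) (tP n)) :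
    ∃ j, inr j ∉ σ := by
  by_contra! h
  exact hσ.2.2 n _ (fun e he => by obtain ⟨a, -, rfl⟩ := mem_image.1 he; exact h a)
    isDirCycle_image_inr

theorem subset_forwardPath {σ : Finset (ZMod n ⊕ ZMod n)} {j : ZMod n} (hσR : σ.toRight = ∅)
    (hj : inl j ∉ σ) : σ ⊆ forwardPath n j := by
  intro e he
  cases e with
  | inl a => exact inl_mem_forwardPath.2 fun h => hj (h ▸ he)
  | inr b => simpa [hσR] using mem_toRight.2 he

theorem subset_backwardPath {σ : Finset (ZMod n ⊕ ZMod n)} {j : ZMod n} (hσL : σ.toLeft = ∅)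
    (hj : inr j ∉ σ) : σ ⊆ backwardPath n j := by
  intro e he
  cases e with
  | inl a => simpa [hσL] using mem_toLeft.2 he
  | inr b => exact inr_mem_backwardPath.2 fun h => hj (h ▸ he)

theorem toRight_forwardPath (j : ZMod n) : (forwardPath n j).toRight = ∅ := by
  ext; simp

theorem toLeft_backwardPath (j : ZMod n) : (backwardPath n j).toLeft = ∅ := by
  ext; simp

theorem forwardPath_mem_Dlf (j : ZMod n) : forwardPath n j ∈ Dlf (sP n) (tP n) := by
  have hinl {e} (he : e ∈ forwardPath n j) : ∃ a, e = inl a := by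
    cases e with
    | inl a => exact ⟨a, rfl⟩
    | inr b => simp at he
  refine ⟨fun e he f hf hef => ?_, fun e he f hf hef => ?_, fun m τ hτ hcyc => ?_⟩
  · obtain ⟨a, rfl⟩ := hinl he
    obtain ⟨b, rfl⟩ := hinl hf
    simpa using hef
  · obtain ⟨a, rfl⟩ := hinl he
    obtain ⟨b, rfl⟩ := hinl hf
    simpa using hef
  · have hτR : τ.toRight = ∅ := subset_empty.1 (toRight_forwardPath j ▸ toRight_subset_toRight hτ)
    simpa using hτ (forall_inl_mem_of_isDirCycle hcyc hτR j)

theorem backwardPath_mem_Dlf (j : ZMod n) : backwardPath n j ∈ Dlf (sP n) (tP n) := by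
  have hinr {e} (he : e ∈ backwardPath n j) : ∃ b, e = inr b := by
    cases e with
    | inl a => simp at he
    | inr b => exact ⟨b, rfl⟩
  refine ⟨fun e he f hf hef => ?_, fun e he f hf hef => ?_, fun m τ hτ hcyc => ?_⟩
  · obtain ⟨a, rfl⟩ := hinr he
    obtain ⟨b, rfl⟩ := hinr hf
    simpa using hef
  · obtain ⟨a, rfl⟩ := hinr he
    obtain ⟨b, rfl⟩ := hinr hf
    simpa using hef
  · have hτL : τ.toLeft = ∅ := subset_empty.1 (toLeft_backwardPath j ▸ toLeft_subset_toLeft hτ)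
    simpa using hτ (forall_inr_mem_of_isDirCycle hcyc hτL j)

theorem card_add_two_le_of_inl_mem_of_inr_mem [Fact (1 < n)] {σ : Finset (ZMod n ⊕ ZMod n)}
    (hσ : σ ∈ Dlf (sP n) (tP n)) {a b : ZMod n} (ha : inl a ∈ σ) (hb : inr b ∈ σ) :
    σ.card + 2 ≤ n := by
  rw [← card_toLeft_add_card_toRight]
  exact card_add_card_add_two_le ⟨a, mem_toLeft.2 ha⟩ ⟨b, mem_toRight.2 hb⟩
    fun a ha b hb => ne_and_add_one_ne_of_inl_mem_of_inr_mem hσ (mem_toLeft.1 ha) (mem_toRight.1 hb)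

theorem exists_eq_forwardPath_or_eq_backwardPath [Fact (1 < n)] {σ : Finset (ZMod n ⊕ ZMod n)}
    (hσ : σ ∈ Dlf (sP n) (tP n)) (hcard : n - 1 ≤ σ.card) :
    ∃ j, σ = forwardPath n j ∨ σ = backwardPath n j := by
  by_cases hσR : σ.toRight = ∅
  · obtain ⟨j, hj⟩ := exists_inl_notMem hσ
    exact ⟨j, .inl <| eq_of_subset_of_card_le (subset_forwardPath hσR hj)
      (by rwa [card_forwardPath])⟩
  · obtain ⟨b, hb⟩ := nonempty_of_ne_empty hσR
    have hσL : σ.toLeft = ∅ := by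
      refine eq_empty_of_forall_notMem fun a ha => ?_
      have := card_add_two_le_of_inl_mem_of_inr_mem hσ (mem_toLeft.1 ha) (mem_toRight.1 hb)
      omega
    obtain ⟨j, hj⟩ := exists_inr_notMem hσ
    exact ⟨j, .inr <| eq_of_subset_of_card_le (subset_backwardPath hσL hj)
      (by rwa [card_backwardPath])⟩

theorem isFacetOf_pureSkel_Dlf_iff [Fact (1 < n)] {σ : Finset (ZMod n ⊕ ZMod n)} :
    IsFacetOf (pureSkel (Dlf (sP n) (tP n)) (n - 2)) σ ↔
      ∃ j, σ = forwardPath n j ∨ σ = backwardPath n j := by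
  have : 1 < n := Fact.out
  rw [isFacetOf_pureSkel_iff]
  constructor
  · rintro ⟨hσ, hcard⟩
    exact exists_eq_forwardPath_or_eq_backwardPath hσ (by omega)
  · rintro ⟨j, rfl | rfl⟩
    · exact ⟨forwardPath_mem_Dlf j, by rw [card_forwardPath]; omega⟩
    · exact ⟨backwardPath_mem_Dlf j, by rw [card_backwardPath]; omega⟩

theorem isFacetOf_forwardPath [Fact (1 < n)] (j : ZMod n) :
    IsFacetOf (Dlf (sP n) (tP n)) (forwardPath n j) := by
  refine ⟨forwardPath_mem_Dlf j, fun τ hτ hsub => eq_of_subset_of_card_le hsub ?_⟩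
  obtain ⟨j', rfl | rfl⟩ := exists_eq_forwardPath_or_eq_backwardPath hτ
    (card_forwardPath j ▸ card_le_card hsub)
  all_goals simp [card_forwardPath, card_backwardPath]

theorem isFacetOf_backwardPath [Fact (1 < n)] (j : ZMod n) :
    IsFacetOf (Dlf (sP n) (tP n)) (backwardPath n j) := by
  refine ⟨backwardPath_mem_Dlf j, fun τ hτ hsub => eq_of_subset_of_card_le hsub ?_⟩
  obtain ⟨j', rfl | rfl⟩ := exists_eq_forwardPath_or_eq_backwardPath hτ
    (card_backwardPath j ▸ card_le_card hsub)
  all_goals simp [card_forwardPath, card_backwardPath]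

theorem ridgeClosed_forwardPath (hn : 3 ≤ n) :
    RidgeClosed (Dlf (sP n) (tP n)) fun σ => ∃ j, σ = forwardPath n j := by
  have : Fact (1 < n) := ⟨by omega⟩
  rintro σ τ ρ - hτ ⟨j, rfl⟩ hρσ hρτ hcard
  rw [card_forwardPath] at hcard
  obtain ⟨e, he⟩ : ρ.Nonempty := card_pos.1 (by omega)
  obtain ⟨a, rfl⟩ : ∃ a, e = inl a := by
    cases e with
    | inl a => exact ⟨a, rfl⟩
    | inr b => simpa using hρσ he
  -- a backward edge would make `τ` a mixed face with at least `n - 1` edges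
  have hτR : τ.toRight = ∅ := by
    refine eq_empty_of_forall_notMem fun b hb => ?_
    have hmixed := card_add_two_le_of_inl_mem_of_inr_mem hτ.1 (hρτ he) (mem_toRight.1 hb)
    have hle := card_le_card (insert_subset (mem_toRight.1 hb) hρτ)
    rw [card_insert_of_notMem fun h => by simpa using hρσ h] at hle
    omega
  obtain ⟨j', hj'⟩ := exists_inl_notMem hτ.1
  exact ⟨j', hτ.2 _ (forwardPath_mem_Dlf j') (subset_forwardPath hτR hj')⟩

theorem ridgeClosed_backwardPath (hn : 3 ≤ n) :
    RidgeClosed (Dlf (sP n) (tP n)) fun σ => ∃ j, σ = backwardPath n j := by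
  have : Fact (1 < n) := ⟨by omega⟩
  rintro σ τ ρ - hτ ⟨j, rfl⟩ hρσ hρτ hcard
  rw [card_backwardPath] at hcard
  obtain ⟨e, he⟩ : ρ.Nonempty := card_pos.1 (by omega)
  obtain ⟨b, rfl⟩ : ∃ b, e = inr b := by
    cases e with
    | inl a => simpa using hρσ he
    | inr b => exact ⟨b, rfl⟩
  have hτL : τ.toLeft = ∅ := by
    refine eq_empty_of_forall_notMem fun a ha => ?_
    have hmixed := card_add_two_le_of_inl_mem_of_inr_mem hτ.1 (mem_toLeft.1 ha) (hρτ he)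
    have hle := card_le_card (insert_subset (mem_toLeft.1 ha) hρτ)
    rw [card_insert_of_notMem fun h => by simpa using hρσ h] at hle
    omega
  obtain ⟨j', hj'⟩ := exists_inr_notMem hτ.1
  exact ⟨j', hτ.2 _ (backwardPath_mem_Dlf j') (subset_backwardPath hτL hj')⟩

theorem not_shellable_Dlf (hn : 3 ≤ n) : ¬ Shellable (Dlf (sP n) (tP n)) := by
  have : Fact (1 < n) := ⟨by omega⟩
  refine not_shellable_of_ridgeClosed (ridgeClosed_forwardPath hn) (ridgeClosed_backwardPath hn)
    (fun σ _ ⟨j, hj⟩ ⟨j', hj'⟩ => ?_) (isFacetOf_forwardPath 0) ⟨0, rfl⟩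
    (isFacetOf_backwardPath 0) ⟨0, rfl⟩
  have : inl (j + 1) ∈ backwardPath n j' := hj' ▸ hj ▸ inl_mem_forwardPath.2 (by simp)
  simp at this

theorem isLeft_eq_of_pair_mem_pureSkel [Fact (1 < n)] {x y : ZMod n ⊕ ZMod n}
    (h : {x, y} ∈ pureSkel (Dlf (sP n) (tP n)) (n - 2)) : x.isLeft = y.isLeft := by
  have : 1 < n := Fact.out
  obtain ⟨ρ, hρ, hcard, hsub⟩ := h
  have hx := hsub (mem_insert_self x {y})
  have hy := hsub (mem_insert_of_mem (mem_singleton_self y))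
  obtain ⟨j, rfl | rfl⟩ := exists_eq_forwardPath_or_eq_backwardPath hρ (by omega) <;>
    cases x <;> cases y <;> simp_all

theorem not_complexConnected_pureSkel_Dlf [Fact (1 < n)] :
    ¬ ComplexConnected (pureSkel (Dlf (sP n) (tP n)) (n - 2)) := by
  have : 1 < n := Fact.out
  intro h
  have hpath := h (inl 0) (inr 0)
    ⟨forwardPath n 1, forwardPath_mem_Dlf 1, by rw [card_forwardPath]; omega, by simp⟩
    ⟨backwardPath n 1, backwardPath_mem_Dlf 1, by rw [card_backwardPath]; omega, by simp⟩
  have key : ∀ y, Relation.ReflTransGen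
      (fun a b => ({a, b} : Finset _) ∈ pureSkel (Dlf (sP n) (tP n)) (n - 2)) (inl 0) y →
      y.isLeft := by
    intro y hy
    induction hy with
    | refl => rfl
    | tail _ hyz ih => exact isLeft_eq_of_pair_mem_pureSkel hyz ▸ ih
  simpa using key _ hpath

theorem not_isSCM_Dlf (hn : 3 ≤ n) (K : Type) [Field K] :
    ¬ IsSCM (ZMod n ⊕ ZMod n) K (Dlf (sP n) (tP n)) := by
  have : Fact (1 < n) := ⟨by omega⟩
  intro h
  have hface : forwardPath n 0 ∈ pureSkel (Dlf (sP n) (tP n)) (n - 2) :=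
    ⟨_, forwardPath_mem_Dlf 0, by rw [card_forwardPath]; omega, subset_rfl⟩
  refine not_complexConnected_pureSkel_Dlf ((h (n - 2)).complexConnected ?_ hface ?_)
  · obtain ⟨ρ, hρ, hcard, -⟩ := hface
    exact ⟨ρ, hρ, hcard, empty_subset _⟩
  · rw [card_forwardPath]; omega

end DoubleCycle

/-- For `n ≥ 3`, the facets of the pure `(n−2)`-skeleton of
`Dlf(Pₙ)` are exactly the sets `{eᵢ, …, e_{i−2}}` and `{eᵢ', …, e_{i−2}'}` (that is,
all `eⱼ` except one, resp. all `eⱼ'` except one); this skeleton is disconnected; hence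
`Dlf(Pₙ)` is not sequentially Cohen–Macaulay (over any field) and not shellable. -/
theorem statement_11 (n : ℕ) (hn : 3 ≤ n) [NeZero n] :
    (∀ σ : Finset (ZMod n ⊕ ZMod n),
        IsFacetOf (pureSkel (Dlf (sP n) (tP n)) (n - 2)) σ ↔
        (∃ j : ZMod n,
          σ = (Finset.univ.image (Sum.inl : ZMod n → ZMod n ⊕ ZMod n)).erase
                (Sum.inl j) ∨
          σ = (Finset.univ.image (Sum.inr : ZMod n → ZMod n ⊕ ZMod n)).erase
                (Sum.inr j))) ∧
    ¬ ComplexConnected (pureSkel (Dlf (sP n) (tP n)) (n - 2)) ∧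
    (∀ (K : Type) [Field K], ¬ IsSCM (ZMod n ⊕ ZMod n) K (Dlf (sP n) (tP n))) ∧
    ¬ Shellable (Dlf (sP n) (tP n)) := by
  have : Fact (1 < n) := ⟨by omega⟩
  exact ⟨fun _ => isFacetOf_pureSkel_Dlf_iff, not_complexConnected_pureSkel_Dlf,
    fun K _ => not_isSCM_Dlf hn K, not_shellable_Dlf hn⟩

end ArXiv
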